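/- Let g_1,...,g_n be affine linear functions on a convex closed domain D ⊆ ℝ^d and f a continuous selector of them (for each x ∈ D there is i with f(x) = g_i(x)). Then f is a piecewise linear function, and hence admits a representation f = max_i min_{j∈K_i} g_j. -/

import Mathlib

/-
Along a segment `[x, y] ⊆ D`, let `τ` be the last time at which some affine piece `g j` that lies
above `f` at `x` lies below `f`. If `τ` were not the endpoint, then just after `τ` the function
`f` would follow a piece `g k` lying strictly below `f` at `x`, while `g j` stays strictly above it;
`g j - g k` would then be positive, nonpositive and positive again along the segment, which is
impossible for an affine function. Hence for all `x, y ∈ D` some `g j` satisfies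
`f x ≤ g j x` and `g j y ≤ f y`, which is exactly what makes
`f = max_{x ∈ D} min {g j | f x ≤ g j x}`.
Piecewise linearity is Baire's theorem applied to the closed coincidence sets `{f = g i}`.
-/

/-- A closed domain in `ℝ^d`: the closure of a nonempty open set. -/
def IsClosedDomain {d : ℕ} (P : Set (Fin d → ℝ)) : Prop :=
  ∃ U : Set (Fin d → ℝ), U.Nonempty ∧ IsOpen U ∧ P = closure U

/-- `f` is piecewise linear on `D`: `D` is a finite union of closed domains on
each of which `f` agrees with an affine linear function. -/
def IsPLOn {d : ℕ} (D : Set (Fin d → ℝ)) (f : (Fin d → ℝ) → ℝ) : Prop :=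
  ∃ 𝒟 : Finset (Set (Fin d → ℝ)),
    (∀ P ∈ 𝒟, IsClosedDomain P) ∧ (⋃ P ∈ 𝒟, P) = D ∧
    ∀ P ∈ 𝒟, ∃ g : (Fin d → ℝ) →ᵃ[ℝ] ℝ, ∀ x ∈ P, f x = g x

/-- `f` coincides on `D` with the max-min lattice polynomial
`x ↦ ⋁_{K ∈ 𝒦} ⋀_{j ∈ K} g j x` for some nonempty family `𝒦` of nonempty
subsets of `{1,…,n}`. -/
def MaxMinRep {d n : ℕ} (D : Set (Fin d → ℝ)) (g : Fin n → ((Fin d → ℝ) →ᵃ[ℝ] ℝ))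
    (f : (Fin d → ℝ) → ℝ) : Prop :=
  ∃ (𝒦 : Finset (Finset (Fin n))) (h𝒦 : 𝒦.Nonempty) (hK : ∀ K ∈ 𝒦, K.Nonempty),
    ∀ x ∈ D, f x = 𝒦.attach.sup' (Finset.attach_nonempty_iff.mpr h𝒦)
      (fun K => K.1.inf' (hK K.1 K.2) (fun j => g j x))

open Set

def IsSelectorOn {α β ι : Type*} (s : Set α) (g : ι → α → β) (f : α → β) : Prop :=
  ∀ x ∈ s, ∃ i, f x = g i x

theorem IsClosedDomain.nonempty {d : ℕ} {D : Set (Fin d → ℝ)} (hD : IsClosedDomain D) :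
    D.Nonempty := by
  obtain ⟨U, hUne, -, rfl⟩ := hD
  exact hUne.closure

theorem IsSelectorOn.exists_ge_left_le_right {ι : Type*} [Finite ι] {φ : ι → ℝ →ᵃ[ℝ] ℝ}
    {h : ℝ → ℝ} {a b : ℝ} (hab : a ≤ b) (hsel : IsSelectorOn (Icc a b) (fun i => ⇑(φ i)) h)
    (hh : ContinuousOn h (Icc a b)) : ∃ j, h a ≤ φ j a ∧ φ j b ≤ h b := by
  have hφ : ∀ i, ContinuousOn (φ i) (Icc a b) :=
    fun i => (φ i).continuous_of_finiteDimensional.continuousOn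
  set T : Set ℝ := ⋃ j ∈ {j | h a ≤ φ j a}, {t ∈ Icc a b | φ j t ≤ h t}
  have hT_closed : IsClosed T :=
    (Set.toFinite _).isClosed_biUnion fun j _ => isClosed_Icc.isClosed_le (hφ j) hh
  have hT_bdd : BddAbove T := ⟨b, fun t ht => by
    obtain ⟨-, -, ⟨-, htb⟩, -⟩ := mem_iUnion₂.1 ht
    exact htb⟩
  have haT : a ∈ T := by
    obtain ⟨j, hj⟩ := hsel a ⟨le_rfl, hab⟩
    exact mem_biUnion (x := j) hj.le ⟨⟨le_rfl, hab⟩, hj.ge⟩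
  set τ := sSup T
  obtain ⟨j, (hj_good : h a ≤ φ j a), hτ, hjτ⟩ :=
    mem_iUnion₂.1 (hT_closed.csSup_mem ⟨a, haT⟩ hT_bdd)
  rcases hτ.2.eq_or_lt with hτb | hτb
  · exact ⟨j, hj_good, hτb ▸ hjτ⟩
  exfalso
  have hT_le : ∀ s ∈ T, s ≤ τ := fun s hs => le_csSup hT_bdd hs
  -- on `(τ, b]` the selector must pick pieces; one of them is picked arbitrarily close to `τ`
  set Z : ι → Set ℝ := fun k => {s ∈ Ioc τ b | φ k s = h s}
  have hcover : Ioc τ b ⊆ ⋃ k, Z k := fun s hs => by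
    obtain ⟨k, hk⟩ := hsel s ⟨hτ.1.trans hs.1.le, hs.2⟩
    exact mem_iUnion.2 ⟨k, hs, hk.symm⟩
  have hτ_cl : τ ∈ ⋃ k, closure (Z k) := by
    rw [← closure_iUnion_of_finite]
    exact closure_mono hcover (by rw [closure_Ioc hτb.ne]; exact ⟨le_rfl, hτb.le⟩)
  obtain ⟨k, hkτ⟩ := mem_iUnion.1 hτ_cl
  obtain ⟨s, ⟨hsτ, hsb⟩, hks⟩ : (Z k).Nonempty := by
    by_contra hZ
    rw [not_nonempty_iff_eq_empty.1 hZ, closure_empty] at hkτ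
    exact hkτ
  have hs : s ∈ Icc a b := ⟨hτ.1.trans hsτ.le, hsb⟩
  have hkτ_eq : φ k τ = h τ := by
    have hsub : Z k ⊆ {t ∈ Icc a b | φ k t = h t} :=
      fun t ⟨ht, hkt⟩ => ⟨⟨hτ.1.trans ht.1.le, ht.2⟩, hkt⟩
    exact (closure_minimal hsub (isClosed_Icc.isClosed_eq (hφ k) hh) hkτ).2
  have hk_bad : φ k a < h a := by
    by_contra! hk
    exact (hT_le s (mem_biUnion (x := k) hk ⟨hs, hks.le⟩)).not_gt hsτ
  have hjs : φ k s < φ j s := by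
    by_contra! hj
    exact (hT_le s (mem_biUnion (x := j) hj_good ⟨hs, hks ▸ hj⟩)).not_gt hsτ
  -- `{t | φ k t < φ j t}` is convex, so it cannot omit `τ ∈ [a, s]` while containing `a` and `s`
  have hpos : (φ j - φ k) τ ∈ Ioi 0 :=
    ((convex_Ioi 0).affine_preimage (φ j - φ k)).ordConnected.out
      (show 0 < φ j a - φ k a by linarith) (show 0 < φ j s - φ k s by linarith) ⟨hτ.1, hsτ.le⟩
  have : φ j τ - φ k τ > 0 := hpos
  linarith

theorem IsSelectorOn.exists_ge_le_of_convex {E ι : Type*} [AddCommGroup E] [Module ℝ E]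
    [TopologicalSpace E] [IsTopologicalAddGroup E] [ContinuousSMul ℝ E] [Finite ι]
    {D : Set E} (hD : Convex ℝ D) {g : ι → E →ᵃ[ℝ] ℝ} {f : E → ℝ}
    (hsel : IsSelectorOn D (fun i => ⇑(g i)) f) (hf : ContinuousOn f D)
    {x y : E} (hx : x ∈ D) (hy : y ∈ D) : ∃ j, f x ≤ g j x ∧ g j y ≤ f y := by
  set L : ℝ →ᵃ[ℝ] E := AffineMap.lineMap x y
  have hL : MapsTo L (Icc 0 1) D := fun t ht => hD.lineMap_mem hx hy ht
  have hsel_L : IsSelectorOn (Icc 0 1) (fun i => ⇑((g i).comp L)) (f ∘ L) :=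
    fun t ht => hsel (L t) (hL ht)
  simpa [L] using hsel_L.exists_ge_left_le_right zero_le_one
    (hf.comp AffineMap.lineMap_continuous.continuousOn hL)

theorem maxMinRep_of_forall_exists_ge_le {d n : ℕ} {D : Set (Fin d → ℝ)} (hD : D.Nonempty)
    {g : Fin n → (Fin d → ℝ) →ᵃ[ℝ] ℝ} {f : (Fin d → ℝ) → ℝ}
    (hsel : IsSelectorOn D (fun i => ⇑(g i)) f)
    (hfg : ∀ x ∈ D, ∀ y ∈ D, ∃ j, f x ≤ g j x ∧ g j y ≤ f y) : MaxMinRep D g f := by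
  classical
  set S : (Fin d → ℝ) → Finset (Fin n) := fun x => {j | f x ≤ g j x}
  have hS : ∀ x ∈ D, (S x).Nonempty := fun x hx => by
    obtain ⟨i, hi⟩ := hsel x hx
    exact ⟨i, Finset.mem_filter.2 ⟨Finset.mem_univ i, hi.le⟩⟩
  set 𝒦 := (Set.toFinite (S '' D)).toFinset
  have h𝒦 : ∀ K, K ∈ 𝒦 ↔ ∃ x ∈ D, S x = K := fun K => by simp [𝒦]
  have hK : ∀ K ∈ 𝒦, K.Nonempty := fun K hK => by
    obtain ⟨x, hx, rfl⟩ := (h𝒦 K).1 hK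
    exact hS x hx
  refine ⟨𝒦, hD.image S |>.mono (by simp [𝒦]), hK, fun y hy => le_antisymm ?_ ?_⟩
  · have hSy : S y ∈ 𝒦 := (h𝒦 _).2 ⟨y, hy, rfl⟩
    refine le_trans ?_ (Finset.le_sup' _ (Finset.mem_attach _ ⟨S y, hSy⟩))
    exact Finset.le_inf' _ _ fun j hj => (Finset.mem_filter.1 hj).2
  · refine Finset.sup'_le _ _ fun ⟨K, hK𝒦⟩ _ => ?_
    obtain ⟨x, hx, rfl⟩ := (h𝒦 K).1 hK𝒦
    obtain ⟨j, hjx, hjy⟩ := hfg x hx y hy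
    exact (Finset.inf'_le _ (Finset.mem_filter.2 ⟨Finset.mem_univ j, hjx⟩)).trans hjy

theorem IsOpen.closure_eq_iUnion_closure_inter_interior {X ι : Type*} [TopologicalSpace X]
    [BaireSpace X] [Finite ι] {U : Set X} (hU : IsOpen U) {A : ι → Set X}
    (hA : ∀ i, IsClosed (A i)) (hUA : U ⊆ ⋃ i, A i) :
    closure U = ⋃ i, closure (U ∩ interior (A i)) := by
  refine (closure_minimal ?_ (isClosed_iUnion_of_finite fun i => isClosed_closure)).antisymm
    (iUnion_subset fun i => closure_mono inter_subset_left)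
  -- Baire's theorem for the closed cover of the whole space by the `A i` and `Uᶜ`
  set B : Option ι → Set X := fun o => o.elim Uᶜ A
  have hB_cover : ⋃ o, B o = univ := by
    refine eq_univ_of_forall fun x => ?_
    by_cases hx : x ∈ U
    · obtain ⟨i, hi⟩ := mem_iUnion.1 (hUA hx)
      exact mem_iUnion.2 ⟨some i, hi⟩
    · exact mem_iUnion.2 ⟨none, hx⟩
  have hB_dense := dense_iUnion_interior_of_closed
    (fun o => o.rec hU.isClosed_compl hA : ∀ o, IsClosed (B o)) hB_cover
  intro x hx
  have hU_inter : U ∩ ⋃ o, interior (B o) = ⋃ i, U ∩ interior (A i) := by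
    rw [iUnion_option, inter_union_distrib_left, inter_iUnion]
    have hU_none : U ∩ interior Uᶜ = ∅ := by
      rw [interior_compl]
      exact sdiff_eq_empty.2 subset_closure
    simp only [B, Option.elim, hU_none, empty_union]
  have := hB_dense.open_subset_closure_inter hU hx
  rw [hU_inter, closure_iUnion_of_finite] at this
  exact this

theorem IsSelectorOn.isPLOn {d : ℕ} {ι : Type*} [Finite ι] {D : Set (Fin d → ℝ)}
    (hD : IsClosedDomain D) {g : ι → (Fin d → ℝ) →ᵃ[ℝ] ℝ} {f : (Fin d → ℝ) → ℝ}
    (hsel : IsSelectorOn D (fun i => ⇑(g i)) f) (hf : ContinuousOn f D) : IsPLOn D f := by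
  obtain ⟨U, -, hU, rfl⟩ := hD
  set A : ι → Set (Fin d → ℝ) := fun i => {x ∈ closure U | f x = g i x}
  have hA : ∀ i, IsClosed (A i) := fun i =>
    isClosed_closure.isClosed_eq hf (g i).continuous_of_finiteDimensional.continuousOn
  have hUA : U ⊆ ⋃ i, A i := fun x hx => by
    obtain ⟨i, hi⟩ := hsel x (subset_closure hx)
    exact mem_iUnion.2 ⟨i, subset_closure hx, hi⟩
  set P : ι → Set (Fin d → ℝ) := fun i => closure (U ∩ interior (A i))
  have hPA : ∀ i, P i ⊆ A i := fun i =>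
    closure_minimal (inter_subset_right.trans interior_subset) (hA i)
  have h𝒟 : {Q | Q.Nonempty ∧ ∃ i, P i = Q}.Finite :=
    (finite_range P).subset fun Q hQ => hQ.2
  refine ⟨h𝒟.toFinset, fun Q hQ => ?_, ?_, fun Q hQ => ?_⟩
  · obtain ⟨hQ, i, rfl⟩ := h𝒟.mem_toFinset.1 hQ
    exact ⟨U ∩ interior (A i), closure_nonempty_iff.1 hQ, hU.inter isOpen_interior, rfl⟩
  · rw [hU.closure_eq_iUnion_closure_inter_interior hA hUA]
    refine (iUnion₂_subset fun Q hQ => ?_).antisymm (iUnion_subset fun i x hx => ?_)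
    · obtain ⟨-, i, rfl⟩ := h𝒟.mem_toFinset.1 hQ
      exact subset_iUnion P i
    · exact mem_biUnion (h𝒟.mem_toFinset.2 ⟨⟨x, hx⟩, i, rfl⟩) hx
  · obtain ⟨-, i, rfl⟩ := h𝒟.mem_toFinset.1 hQ
    exact ⟨g i, fun x hx => (hPA i hx).2⟩

/-- A continuous selector of a finite family of affine linear functions on a
convex closed domain is piecewise linear, and hence admits a max-min
representation in the `g j`. -/
theorem continuous_selector_pl {d n : ℕ} (D : Set (Fin d → ℝ)) (hconv : Convex ℝ D)
    (hdom : IsClosedDomain D) (g : Fin n → ((Fin d → ℝ) →ᵃ[ℝ] ℝ))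
    (f : (Fin d → ℝ) → ℝ) (hf : ContinuousOn f D)
    (hsel : ∀ x ∈ D, ∃ i : Fin n, f x = g i x) :
    IsPLOn D f ∧ MaxMinRep D g f := by
  have hsel : IsSelectorOn D (fun i => ⇑(g i)) f := hsel
  exact ⟨hsel.isPLOn hdom hf, maxMinRep_of_forall_exists_ge_le hdom.nonempty hsel
    fun x hx y hy => hsel.exists_ge_le_of_convex hconv hf hx hy⟩
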